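/- arXiv:1212.4735 — 8 statements merged into one kernel-verified Lean document; each statement's English description precedes it below -/
import Mathlib

section
/- Let p be a prime and k a perfect field of characteristic p. An element f of the Laurent series field k((t)) lies, for every natural number n, in the image of the n-th iterate of the Frobenius endomorphism g ↦ g^p of k((t)) if and only if f belongs to k (identified with the subfield of constant Laurent series). Equivalently, ⋂_{n≥0} { g^{p^n} : g ∈ k((t)) } = k. -/
/-!
If `f = g ^ p ^ n` then `p ^ n` divides the `t`-adic order of `f`; so a series with `p ^ n`-th
roots for all `n` has order `0` (or is zero). Since `k` is perfect, the constant term `c` of such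
an `f` also has all `p ^ n`-th roots, and Frobenius is additive, so `f - c` again has all
`p ^ n`-th roots. Its coefficient at `0` vanishes, hence its order is not `0`, and `f - c = 0`.
-/

open HahnSeries

namespace LaurentSeries

theorem order_eq_zero_of_forall_exists_pow_eq {R : Type*} [CommRing R] [NoZeroDivisors R]
    {q : ℕ} (hq : 1 < q) {f : LaurentSeries R}
    (hf : ∀ n, ∃ g : LaurentSeries R, g ^ q ^ n = f) : f.order = 0 := by
  by_contra hf0
  obtain ⟨n, hn⟩ := (Int.finiteMultiplicity_iff (a := q)).2 ⟨by omega, hf0⟩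
  obtain ⟨g, rfl⟩ := hf (n + 1)
  exact hn ⟨g.order, by simp⟩

theorem algebraMap_coeff_zero_of_forall_exists_pow_eq {k : Type*} [Field k] {p : ℕ}
    [ExpChar k p] [PerfectRing k p] (hp : 1 < p) {f : LaurentSeries k}
    (hf : ∀ n, ∃ g : LaurentSeries k, g ^ p ^ n = f) : algebraMap k _ (f.coeff 0) = f := by
  have : ExpChar (LaurentSeries k) p :=
    expChar_of_injective_algebraMap (algebraMap k _).injective p
  have hroots (n : ℕ) : ∃ g : LaurentSeries k, g ^ p ^ n = f - algebraMap k _ (f.coeff 0) := by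
    obtain ⟨g, rfl⟩ := hf n
    obtain ⟨d, hd⟩ := (iterateFrobeniusEquiv k p n).surjective ((g ^ p ^ n).coeff 0)
    refine ⟨g - algebraMap k _ d, ?_⟩
    rw [sub_pow_expChar_pow, ← map_pow, ← hd, iterateFrobeniusEquiv_apply, iterateFrobenius_def]
  rw [eq_comm, ← sub_eq_zero, ← coeff_order_eq_zero,
    order_eq_zero_of_forall_exists_pow_eq hp hroots]
  simp [algebraMap_apply']

end LaurentSeries

theorem stmt_0_general (p : ℕ) (hp : p.Prime) (k : Type*) [Field k] [ExpChar k p]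
    [PerfectRing k p] (f : LaurentSeries k) :
    (∀ n : ℕ, ∃ g : LaurentSeries k, g ^ p ^ n = f) ↔
      f ∈ Set.range (algebraMap k (LaurentSeries k)) := by
  refine ⟨fun hf ↦
    ⟨f.coeff 0, LaurentSeries.algebraMap_coeff_zero_of_forall_exists_pow_eq hp.one_lt hf⟩, ?_⟩
  rintro ⟨c, rfl⟩ n
  obtain ⟨d, rfl⟩ := (iterateFrobeniusEquiv k p n).surjective c
  exact ⟨algebraMap k _ d, by rw [← map_pow, iterateFrobeniusEquiv_apply, iterateFrobenius_def]⟩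

/-- For a perfect field `k` of characteristic `p`, an element of the Laurent series field
`k((t))` is a `p^n`-th power for every `n` if and only if it is a constant series,
i.e. lies in the image of `k`. -/
theorem stmt_0 (p : ℕ) (hp : p.Prime) (k : Type*) [Field k] [CharP k p] [ExpChar k p]
    [PerfectRing k p] (f : LaurentSeries k) :
    (∀ n : ℕ, ∃ g : LaurentSeries k, g ^ p ^ n = f) ↔
      f ∈ Set.range (algebraMap k (LaurentSeries k)) :=
  stmt_0_general p hp k f
end

section
/- Let p be a prime and let F ⊆ K be finite extensions of ℚ_p with [K:F] > 1. Then the set { x ∈ K^× : N_{K/F}(x) = 1 } of elements of norm 1 is infinite. -/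
/-!
If the norm-one subgroup of `Kˣ` were finite, of order `m`, then for every `x ≠ 0` the element
`x ^ n / N(x)` (with `n = [K : F]`) has norm one, so `x ^ (n * m) ∈ F`. In characteristic zero
this forces `K = F`: if a linear form `φ` vanishes on `F`, then `t ↦ φ ((1 + t x) ^ (n * m))` is
a polynomial function vanishing on the infinite field `F`, and its linear coefficient is
`n * m * φ x`, so `φ x = 0`.
-/

open Polynomial in
theorem Submodule.mem_of_forall_one_add_smul_pow_mem {F A : Type*} [Field F] [CharZero F]
    [CommRing A] [Algebra F A] (V : Submodule F A) {M : ℕ} (hM : M ≠ 0) {x : A}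
    (h : ∀ t : F, (1 + t • x) ^ M ∈ V) : x ∈ V := by
  rw [← Submodule.Quotient.mk_eq_zero, ← Module.forall_dual_apply_eq_zero_iff F]
  intro φ
  set ψ : A →ₗ[F] F := φ ∘ₗ V.mkQ
  have hψV : ∀ v ∈ V, ψ v = 0 := fun v hv ↦ by
    simp [ψ, (Submodule.Quotient.mk_eq_zero V).mpr hv]
  set q : F[X] := ∑ k ∈ Finset.range (M + 1), C ((M.choose k : F) * ψ (x ^ k)) * X ^ k
  have hq_eval : ∀ t : F, q.eval t = ψ ((1 + t • x) ^ M) := fun t ↦ by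
    rw [add_comm, add_pow, map_sum, eval_finsetSum]
    refine Finset.sum_congr rfl fun k _ ↦ ?_
    have : (t • x) ^ k * 1 ^ (M - k) * (M.choose k : A) = ((M.choose k : F) * t ^ k) • x ^ k := by
      rw [one_pow, mul_one, _root_.smul_pow, mul_smul, Nat.cast_smul_eq_nsmul, smul_comm,
        smul_mul_assoc, ← nsmul_eq_mul']
    rw [this, map_smul, smul_eq_mul, eval_mul_X_pow, eval_C]
    ring
  have hq : q = 0 := Polynomial.funext fun t ↦ by rw [hq_eval, hψV _ (h t), eval_zero]
  have hcoeff : q.coeff 1 = M * ψ x := by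
    simp only [q, finsetSum_coeff, coeff_C_mul_X_pow]
    rw [Finset.sum_ite_eq, if_pos (by simp; omega), Nat.choose_one_right, pow_one]
  have : (M : F) * ψ x = 0 := by rw [← hcoeff, hq, coeff_zero]
  exact (mul_eq_zero.mp this).resolve_left (Nat.cast_ne_zero.mpr hM)

theorem Subalgebra.bot_eq_top_of_forall_pow_mem_bot {F A : Type*} [Field F] [CharZero F]
    [CommRing A] [Algebra F A] {M : ℕ} (hM : M ≠ 0) (h : ∀ x : A, x ^ M ∈ (⊥ : Subalgebra F A)) :
    (⊥ : Subalgebra F A) = ⊤ :=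
  eq_top_iff.mpr fun _ _ ↦
    (Subalgebra.toSubmodule ⊥).mem_of_forall_one_add_smul_pow_mem hM fun _ ↦ h _

theorem MonoidHom.pow_mem_range_of_comp_eq_pow {G H : Type*} [CommGroup G] [CommGroup H]
    (ν : G →* H) (ι : H →* G) {n : ℕ} (hνι : ∀ h, ν (ι h) = h ^ n) [Finite ν.ker] (g : G) :
    g ^ (n * Nat.card ν.ker) ∈ ι.range := by
  have hmem : g ^ n * (ι (ν g))⁻¹ ∈ ν.ker := by
    rw [mem_ker, map_mul, map_pow, map_inv, hνι, mul_inv_cancel]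
  have hpow : (g ^ n * (ι (ν g))⁻¹) ^ Nat.card ν.ker = 1 := by
    simpa using congrArg Subtype.val (pow_card_eq_one' (G := ν.ker) (x := ⟨_, hmem⟩))
  rw [mul_pow, inv_pow, mul_inv_eq_one, ← pow_mul] at hpow
  exact ⟨ν g ^ Nat.card ν.ker, by rw [map_pow, hpow]⟩

theorem Algebra.pow_mem_bot_of_finite_ker_norm {F K : Type*} [Field F] [Field K] [Algebra F K]
    [Finite (Units.map (Algebra.norm F : K →* F)).ker] (x : K) :
    x ^ (Module.finrank F K * Nat.card (Units.map (Algebra.norm F : K →* F)).ker) ∈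
      (⊥ : Subalgebra F K) := by
  rcases eq_or_ne x 0 with rfl | hx
  · rw [zero_pow_eq]
    split_ifs <;> simp
  obtain ⟨c, hc⟩ := (Units.map (Algebra.norm F : K →* F)).pow_mem_range_of_comp_eq_pow
    (Units.map (algebraMap F K : F →* K)) (fun c ↦ Units.ext (Algebra.norm_algebraMap _))
    (Units.mk0 x hx)
  exact ⟨c, by simpa using congrArg Units.val hc⟩

theorem stmt_1_general (p : ℕ) [Fact p.Prime] (F K : Type*) [Field F] [Field K]
    [Algebra ℚ_[p] F] [Algebra F K]
    (h : 1 < Module.finrank F K) :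
    {x : K | x ≠ 0 ∧ Algebra.norm F x = 1}.Infinite := by
  have : CharZero F := charZero_of_injective_algebraMap (algebraMap ℚ_[p] F).injective
  have : Infinite (Units.map (Algebra.norm F : K →* F)).ker := by
    refine not_finite_iff_infinite.mp fun _ ↦ h.ne' ?_
    refine Subalgebra.bot_eq_top_iff_finrank_eq_one.mp ?_
    exact Subalgebra.bot_eq_top_of_forall_pow_mem_bot (Nat.mul_ne_zero (by omega) Nat.card_pos.ne')
      Algebra.pow_mem_bot_of_finite_ker_norm
  refine Set.infinite_of_injective_forall_mem
    (f := fun u : (Units.map (Algebra.norm F : K →* F)).ker ↦ (u : Kˣ).val)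
    (fun u v huv ↦ Subtype.ext (Units.ext huv)) fun u ↦ ⟨u.1.ne_zero, ?_⟩
  simpa using congrArg Units.val u.2

/-- If `F ⊆ K` are finite extensions of `ℚ_p` with `[K : F] > 1`, then the set of
elements of `K^×` of norm `1` (for the norm of `K/F`) is infinite. -/
theorem stmt_1 (p : ℕ) [Fact p.Prime] (F K : Type*) [Field F] [Field K]
    [Algebra ℚ_[p] F] [Algebra ℚ_[p] K] [Algebra F K] [IsScalarTower ℚ_[p] F K]
    [FiniteDimensional ℚ_[p] F] [FiniteDimensional ℚ_[p] K]
    (h : 1 < Module.finrank F K) :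
    {x : K | x ≠ 0 ∧ Algebra.norm F x = 1}.Infinite :=
  stmt_1_general p F K h
end

section
/- Let Ω be a field, k a subfield of Ω, and x, y ∈ Ω elements that are algebraically independent over k. If an element α ∈ Ω is algebraic over the subfield k(x) generated by x and also algebraic over the subfield k(y) generated by y, then α is algebraic over k. -/
/-!
Algebraic closure over `k(S)` is the closure operator of the algebraic matroid of `Ω / k`, and in
any matroid the closures of two sets whose union is independent meet in the closure of their
intersection. For `{x} ∪ {y}` that intersection is empty, whose closure consists of the elements
algebraic over `k`.
-/

theorem AlgebraicIndepOn.isAlgebraic_adjoin_inter {R A : Type*} [CommRing R] [CommRing A]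
    [IsDomain A] [Algebra R A] [FaithfulSMul R A] {I J : Set A}
    (hIJ : AlgebraicIndepOn R id (I ∪ J)) {a : A} (hI : IsAlgebraic (Algebra.adjoin R I) a)
    (hJ : IsAlgebraic (Algebra.adjoin R J) a) : IsAlgebraic (Algebra.adjoin R (I ∩ J)) a := by
  have hcl := (AlgebraicIndependent.matroid_indep_iff.mpr hIJ).closure_inter_eq_inter_closure
  simp only [AlgebraicIndependent.matroid_closure_eq] at hcl
  exact (hcl ▸ ⟨hI, hJ⟩ : a ∈ (Subalgebra.algebraicClosure (Algebra.adjoin R (I ∩ J)) A : Set A))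

/-- If `x, y ∈ Ω` are algebraically independent over a subfield `k`, then any `α ∈ Ω`
which is algebraic over both `k(x)` and `k(y)` is algebraic over `k`. -/
theorem stmt_3 (k Ω : Type*) [Field k] [Field Ω] [Algebra k Ω]
    (x y α : Ω) (h : AlgebraicIndependent k ![x, y])
    (hx : IsAlgebraic (IntermediateField.adjoin k {x}) α)
    (hy : IsAlgebraic (IntermediateField.adjoin k {y}) α) :
    IsAlgebraic k α := by
  have hxy : x ≠ y := by simpa using h.injective.ne (show (0 : Fin 2) ≠ 1 by decide)
  have hind : AlgebraicIndepOn k id ({x} ∪ {y}) := by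
    have hrange : Set.range ![x, y] = {x} ∪ {y} := by simp
    exact hrange ▸ h.to_subtype_range
  have hα := hind.isAlgebraic_adjoin_inter (IntermediateField.isAlgebraic_adjoin_iff.mp hx)
    (IntermediateField.isAlgebraic_adjoin_iff.mp hy)
  rw [(Set.disjoint_singleton.mpr hxy).inter_eq, Algebra.adjoin_empty] at hα
  exact Subalgebra.isAlgebraic_of_isAlgebraic_bot hα
end

section
/- Let E be a field of characteristic p > 0 and q = p^m with m ≥ 1, and let k = { a ∈ E : a^q = a } be the subfield of E fixed by the q-power Frobenius. Let D be an E-vector space and f : D → D an additive map satisfying f(a·v) = a^q·f(v) for all a ∈ E and v ∈ D. Then every family of vectors of D fixed by f (i.e. with f(v_i) = v_i for every index i) that is linearly independent over k is linearly independent over E. -/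
/-!
Minimal-relation argument. If `∑ cᵢ vᵢ = 0` over `E` with some `cⱼ ≠ 0`, rescale so that
`cⱼ = 1`. Applying `f` gives `∑ cᵢ^q vᵢ = 0`, and subtracting yields a relation with
coefficients `cᵢ^q - cᵢ` in which the `j`-th one vanishes. By induction on the support this
shorter relation is trivial, so every `cᵢ` lies in `k`, contradicting independence over `k`.
-/

section SemilinearFixed

variable {E D ι : Type*} [Field E] [AddCommGroup D] [Module E D]
  {φ : E → E} {f : D → D} {v : ι → D}

theorem sum_map_smul_eq_zero_of_fixed (hadd : ∀ x y : D, f (x + y) = f x + f y)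
    (hsmul : ∀ (a : E) (x : D), f (a • x) = φ a • f x) (hfix : ∀ i, f (v i) = v i)
    {s : Finset ι} {c : ι → E} (h : ∑ i ∈ s, c i • v i = 0) :
    ∑ i ∈ s, φ (c i) • v i = 0 := by
  simpa [map_sum, hsmul, hfix] using (congrArg (AddMonoidHom.mk' f hadd) h).trans (map_zero _)

theorem eq_zero_of_sum_smul_eq_zero_of_fixed (hφ : φ 1 = 1)
    (hadd : ∀ x y : D, f (x + y) = f x + f y)
    (hsmul : ∀ (a : E) (x : D), f (a • x) = φ a • f x) (hfix : ∀ i, f (v i) = v i)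
    (hindep : ∀ (s : Finset ι) (c : ι → E), (∀ i, φ (c i) = c i) →
      ∑ i ∈ s, c i • v i = 0 → ∀ i ∈ s, c i = 0)
    (s : Finset ι) (c : ι → E) (hc : ∑ i ∈ s, c i • v i = 0) : ∀ i ∈ s, c i = 0 := by
  classical
  induction s using Finset.strongInduction generalizing c with
  | _ s ih =>
  intro j hj
  by_contra hcj
  set d : ι → E := fun i => (c j)⁻¹ * c i
  have hdj : d j = 1 := inv_mul_cancel₀ hcj
  have hd : ∑ i ∈ s, d i • v i = 0 := by
    simp only [d, mul_smul, ← Finset.smul_sum, hc, smul_zero]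
  have hshorter : ∑ i ∈ s.erase j, (φ (d i) - d i) • v i = 0 := by
    rw [Finset.sum_erase _ (by simp [hdj, hφ])]
    simp only [sub_smul, Finset.sum_sub_distrib,
      sum_map_smul_eq_zero_of_fixed hadd hsmul hfix hd, hd, sub_zero]
  have hfixed : ∀ i ∈ s, φ (d i) = d i := by
    intro i hi
    by_cases hij : i = j
    · rw [hij, hdj, hφ]
    · exact sub_eq_zero.mp <| ih _ (Finset.erase_ssubset hj) _ hshorter i
        (Finset.mem_erase.mpr ⟨hij, hi⟩)
  -- Padding by `1` outside `s` keeps every coefficient fixed by `φ`.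
  have hdj0 := hindep s (fun i => if i ∈ s then d i else 1)
    (fun i => by split_ifs with hi; exacts [hfixed i hi, hφ])
    (by rw [← hd]; exact Finset.sum_congr rfl fun i hi => by simp [hi]) j hj
  simp [hj, hdj] at hdj0

end SemilinearFixed

theorem stmt_5_general (E : Type*) [Field E]
    (q : ℕ)
    (D : Type*) [AddCommGroup D] [Module E D]
    (f : D → D) (hadd : ∀ x y : D, f (x + y) = f x + f y)
    (hsmul : ∀ (a : E) (x : D), f (a • x) = a ^ q • f x)
    (ι : Type*) (v : ι → D) (hfix : ∀ i, f (v i) = v i)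
    (hindep : ∀ (s : Finset ι) (c : ι → E), (∀ i, c i ^ q = c i) →
      ∑ i ∈ s, c i • v i = 0 → ∀ i ∈ s, c i = 0) :
    ∀ (s : Finset ι) (c : ι → E), ∑ i ∈ s, c i • v i = 0 → ∀ i ∈ s, c i = 0 :=
  eq_zero_of_sum_smul_eq_zero_of_fixed (one_pow q) hadd hsmul hfix hindep

/-- Let `E` be a field of characteristic `p > 0`, `q = p^m` (`m ≥ 1`), and
`k = {a ∈ E | a^q = a}` its subfield of `q`-Frobenius-fixed elements. If `f : D → D` is an
additive `q`-semilinear map on an `E`-vector space `D`, then any family of `f`-fixed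
vectors which is linearly independent over `k` (expressed elementwise: only the trivial
linear relation with coefficients satisfying `c^q = c` holds) is linearly
independent over `E`. -/
theorem stmt_5 (p : ℕ) (hp : p.Prime) (E : Type*) [Field E] [CharP E p]
    (m : ℕ) (hm : 1 ≤ m) (q : ℕ) (hq : q = p ^ m)
    (D : Type*) [AddCommGroup D] [Module E D]
    (f : D → D) (hadd : ∀ x y : D, f (x + y) = f x + f y)
    (hsmul : ∀ (a : E) (x : D), f (a • x) = a ^ q • f x)
    (ι : Type*) (v : ι → D) (hfix : ∀ i, f (v i) = v i)
    (hindep : ∀ (s : Finset ι) (c : ι → E), (∀ i, c i ^ q = c i) →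
      ∑ i ∈ s, c i • v i = 0 → ∀ i ∈ s, c i = 0) :
    ∀ (s : Finset ι) (c : ι → E), ∑ i ∈ s, c i • v i = 0 → ∀ i ∈ s, c i = 0 :=
  stmt_5_general E q D f hadd hsmul ι v hfix hindep
end

section
/- Let R be a complete discrete valuation ring with uniformizer π and residue field k. Let S = R[[u]][1/u] be the localization of the power series ring R[[u]] at the multiplicative set of powers of u, and let A be the π-adic completion of S. Then A is a complete discrete valuation ring in which the image of π generates the maximal ideal, and the quotient A/πA is isomorphic as a ring to the Laurent series field k((u)). -/
set_option synthInstance.maxHeartbeats 1000000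
set_option maxHeartbeats 1000000
open IsLocalRing

variable (R : Type*) [CommRing R] [IsDomain R] [IsDiscreteValuationRing R]

/-- `S = R[[u]][1/u]`, the localization of the power series ring `R[[u]]` away from `u`. -/
noncomputable abbrev laurentLoc :=
  Localization.Away (PowerSeries.X : PowerSeries R)

/-- The image of `π ∈ R` in `S = R[[u]][1/u]`. -/
noncomputable def piImage (π : R) : laurentLoc R :=
  algebraMap (PowerSeries R) (laurentLoc R) (PowerSeries.C π)

/-- The `π`-adic completion `A` of `S = R[[u]][1/u]`. -/
noncomputable abbrev piAdicCompletion (π : R) :=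
  AdicCompletion (Ideal.span {piImage R π}) (laurentLoc R)

/-!
`S = R[[u]][1/u]` is a Noetherian domain, and reducing coefficients modulo `π` identifies
`S/πS` with the field `k((u))`. The `π`-adic completion `A` of `S` is `π`-adically complete
with `A/πA ≅ S/πS`, so `πA` is a maximal ideal inside the Jacobson radical and `A` is local
with maximal ideal `πA`; flatness of `A` over the Noetherian ring `S` keeps `π` a
nonzerodivisor. Since `A` is `π`-adically separated, every nonzero element of `A` is `π ^ n`
times an element not divisible by `π`, i.e. a unit. This forces `A` to be a domain, and a DVR
with uniformizer `π`.
-/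

open Ideal

section UniformizerFactorization

variable {A : Type*} [CommRing A] {q : A}

theorem exists_eq_pow_mul_not_dvd_of_isHausdorff [IsHausdorff (span {q}) A] {x : A}
    (hx : x ≠ 0) : ∃ (n : ℕ) (y : A), ¬q ∣ y ∧ x = q ^ n * y := by
  have hfin : FiniteMultiplicity q x := by
    refine not_not.mp fun h ↦ hx (IsHausdorff.haus' (I := span {q}) x fun n ↦ ?_)
    rw [SModEq.zero, smul_eq_mul, mul_top, span_singleton_pow, mem_span_singleton]
    exact FiniteMultiplicity.not_iff_forall.mp h n
  obtain ⟨y, hy⟩ := pow_multiplicity_dvd q x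
  refine ⟨multiplicity q x, y, fun ⟨z, hz⟩ ↦ ?_, hy⟩
  exact hfin.not_pow_dvd_of_multiplicity_lt (Nat.lt_succ_self _)
    ⟨z, by rw [pow_succ, mul_assoc, ← hz, ← hy]⟩

variable [IsLocalRing A] [IsHausdorff (span {q}) A]

theorem exists_eq_pow_mul_unit_of_maximalIdeal_eq_span
    (hm : maximalIdeal A = span {q}) {x : A} (hx : x ≠ 0) :
    ∃ (n : ℕ) (u : Aˣ), x = q ^ n * u := by
  obtain ⟨n, y, hy, rfl⟩ := exists_eq_pow_mul_not_dvd_of_isHausdorff (q := q) hx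
  have hunit : IsUnit y := by
    by_contra h
    exact hy (mem_span_singleton.mp (hm ▸ (mem_maximalIdeal y).mpr h))
  exact ⟨n, hunit.unit, rfl⟩

theorem isDomain_of_maximalIdeal_eq_span (hm : maximalIdeal A = span {q})
    (hq : IsSMulRegular A q) : IsDomain A := by
  refine @NoZeroDivisors.to_isDomain A _ _ ⟨fun {x y} hxy ↦ ?_⟩
  by_contra! hne
  obtain ⟨a, u, rfl⟩ := exists_eq_pow_mul_unit_of_maximalIdeal_eq_span hm hne.1
  obtain ⟨b, v, rfl⟩ := exists_eq_pow_mul_unit_of_maximalIdeal_eq_span hm hne.2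
  have : q ^ (a + b) • ((u * v : Aˣ) : A) = 0 := by
    rw [← hxy, smul_eq_mul, Units.val_mul, pow_add]; ring
  exact (u * v).ne_zero ((hq.pow (a + b)).right_eq_zero_of_smul this)

theorem isDiscreteValuationRing_of_maximalIdeal_eq_span [IsDomain A]
    (hm : maximalIdeal A = span {q}) (hq : q ≠ 0) : IsDiscreteValuationRing A :=
  .ofHasUnitMulPowIrreducibleFactorization
    ⟨q, IsDiscreteValuationRing.irreducible_of_span_eq_maximalIdeal q hq hm,
      fun hx ↦ (exists_eq_pow_mul_unit_of_maximalIdeal_eq_span hm hx).imp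
        fun n ⟨u, hu⟩ ↦ ⟨u, by rw [hu, mul_comm]⟩⟩

end UniformizerFactorization

namespace AdicCompletion

variable {T : Type*} [CommRing T] (p : T)

theorem map_algebraMap_span_singleton :
    (span {p}).map (algebraMap T (AdicCompletion (span {p}) T)) =
      span {algebraMap T (AdicCompletion (span {p}) T) p} := by
  rw [Ideal.map_span, Set.image_singleton]

theorem isAdicComplete_span_algebraMap :
    IsAdicComplete (span {algebraMap T (AdicCompletion (span {p}) T) p})
      (AdicCompletion (span {p}) T) :=
  map_algebraMap_span_singleton p ▸ isAdicComplete_self _ (Submodule.fg_span_singleton p)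

theorem isMaximal_span_algebraMap [(span {p}).IsMaximal] :
    (span {algebraMap T (AdicCompletion (span {p}) T) p}).IsMaximal :=
  map_algebraMap_span_singleton p ▸
    isMaximal_map_of_le _ _ le_rfl (Submodule.fg_span_singleton p)

noncomputable def quotientSpanAlgebraMapEquiv :
    (AdicCompletion (span {p}) T ⧸ span {algebraMap T (AdicCompletion (span {p}) T) p}) ≃+*
      T ⧸ span {p} :=
  (quotEquivOfEq (by rw [ker_evalOneₐ_eq_map _ (Submodule.fg_span_singleton p),
      map_algebraMap_span_singleton])).trans
    (RingHom.quotientKerEquivOfSurjective (evalOneₐ_surjective (span {p})))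

theorem isSMulRegular_algebraMap [IsNoetherianRing T] (hp : IsSMulRegular T p) :
    IsSMulRegular (AdicCompletion (span {p}) T) (algebraMap T (AdicCompletion (span {p}) T) p) :=
  hp.of_flat

end AdicCompletion

theorem PowerSeries.ker_map_of_ker_eq_span_singleton {A B : Type*} [CommRing A] [CommRing B]
    {f : A →+* B} {a : A} (h : RingHom.ker f = span {a}) :
    RingHom.ker (PowerSeries.map f) = span {PowerSeries.C a} := by
  ext g
  simp only [RingHom.mem_ker, mem_span_singleton]
  constructor
  · intro hg
    have hdvd : ∀ n, a ∣ PowerSeries.coeff n g := fun n ↦ by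
      rw [← mem_span_singleton, ← h, RingHom.mem_ker, ← PowerSeries.coeff_map, hg, map_zero]
    choose c hc using hdvd
    exact ⟨PowerSeries.mk c, PowerSeries.ext fun n ↦ by
      rw [PowerSeries.coeff_C_mul, PowerSeries.coeff_mk, hc]⟩
  · rintro ⟨g, rfl⟩
    have hfa : f a = 0 := RingHom.mem_ker.mp (h ▸ mem_span_singleton_self a)
    rw [map_mul, PowerSeries.map_C, hfa, map_zero, zero_mul]

theorem PowerSeries.map_powers_X {A B : Type*} [CommRing A] [CommRing B] (f : A →+* B) :
    (Submonoid.powers (PowerSeries.X : PowerSeries A)).map (PowerSeries.map f) =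
      Submonoid.powers PowerSeries.X := by
  rw [Submonoid.map_powers, PowerSeries.map_X]

section LaurentResidue

variable {𝒪 : Type*} [CommRing 𝒪]

theorem isSMulRegular_piImage [IsDomain 𝒪] {π : 𝒪} (hπ : π ≠ 0) :
    IsSMulRegular (laurentLoc 𝒪) (piImage 𝒪 π) :=
  .of_isLocalization _ (Submonoid.powers PowerSeries.X)
    (.of_ne_zero ((map_ne_zero_iff _ PowerSeries.C_injective).mpr hπ))

variable [IsLocalRing 𝒪]

variable (𝒪) in
noncomputable def laurentResidue : laurentLoc 𝒪 →+* LaurentSeries (ResidueField 𝒪) :=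
  IsLocalization.map _ (PowerSeries.map (residue 𝒪))
    ((PowerSeries.map_powers_X (residue 𝒪)).symm ▸ Submonoid.le_comap_map _)

theorem laurentResidue_surjective : Function.Surjective (laurentResidue 𝒪) := by
  have : IsLocalization ((Submonoid.powers PowerSeries.X).map (PowerSeries.map (residue 𝒪)))
      (LaurentSeries (ResidueField 𝒪)) := by
    rw [PowerSeries.map_powers_X]; infer_instance
  exact IsLocalization.map_surjective_of_surjective _ _ _
    (PowerSeries.map_surjective (residue 𝒪) residue_surjective)

variable {π : 𝒪} (hπ : maximalIdeal 𝒪 = span {π})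
include hπ

theorem ker_laurentResidue : RingHom.ker (laurentResidue 𝒪) = span {piImage 𝒪 π} := by
  rw [laurentResidue, IsLocalization.ker_map _ _ (PowerSeries.map_powers_X _),
    PowerSeries.ker_map_of_ker_eq_span_singleton (by rw [ker_residue, hπ]),
    Ideal.map_span, Set.image_singleton, piImage]

noncomputable def quotientSpanPiImageEquiv :
    laurentLoc 𝒪 ⧸ span {piImage 𝒪 π} ≃+* LaurentSeries (ResidueField 𝒪) :=
  (quotEquivOfEq (ker_laurentResidue hπ).symm).trans
    (RingHom.quotientKerEquivOfSurjective laurentResidue_surjective)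

theorem isMaximal_span_piImage : (span {piImage 𝒪 π}).IsMaximal :=
  ker_laurentResidue hπ ▸ RingHom.ker_isMaximal_of_surjective _ laurentResidue_surjective

end LaurentResidue

theorem stmt_8 (π : R) (hπ : Irreducible π) :
    (∃ hd : IsDomain (piAdicCompletion R π), @IsDiscreteValuationRing _ _ hd) ∧
    (∃ hl : IsLocalRing (piAdicCompletion R π),
      @maximalIdeal _ _ hl = Ideal.span
        {algebraMap (laurentLoc R) (piAdicCompletion R π) (piImage R π)}) ∧
    IsAdicComplete
      (Ideal.span {algebraMap (laurentLoc R) (piAdicCompletion R π) (piImage R π)})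
      (piAdicCompletion R π) ∧
    Nonempty
      ((piAdicCompletion R π ⧸
          Ideal.span {algebraMap (laurentLoc R) (piAdicCompletion R π) (piImage R π)})
        ≃+* LaurentSeries (ResidueField R)) := by
  set q := algebraMap (laurentLoc R) (piAdicCompletion R π) (piImage R π)
  have := isMaximal_span_piImage hπ.maximalIdeal_eq
  have hcomplete : IsAdicComplete (span {q}) _ := AdicCompletion.isAdicComplete_span_algebraMap _
  have hmax : (span {q}).IsMaximal := AdicCompletion.isMaximal_span_algebraMap _
  let hl := isLocalRing_of_isAdicComplete_maximal (span {q})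
  have hm : maximalIdeal _ = span {q} := (eq_maximalIdeal hmax).symm
  have hreg : IsSMulRegular _ q :=
    AdicCompletion.isSMulRegular_algebraMap _ (isSMulRegular_piImage hπ.ne_zero)
  let hd := isDomain_of_maximalIdeal_eq_span hm hreg
  have hq : q ≠ 0 := IsLeftRegular.ne_zero hreg
  exact ⟨⟨hd, isDiscreteValuationRing_of_maximalIdeal_eq_span hm hq⟩, ⟨hl, hm⟩, hcomplete,
    ⟨(AdicCompletion.quotientSpanAlgebraMapEquiv _).trans
      (quotientSpanPiImageEquiv hπ.maximalIdeal_eq)⟩⟩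
end

section
/- Let B be a discrete valuation ring. Let A be a discrete valuation ring which is a B-algebra such that the structure map B → A is an injective local ring homomorphism and the image of a uniformizer of B generates the maximal ideal of A (A is unramified over B). Let C be a discrete valuation ring which is a B-algebra, finite and free as a B-module, such that B → C is an injective local ring homomorphism inducing an isomorphism on residue fields (C is totally ramified over B). Then A ⊗_B C is a discrete valuation ring, its maximal ideal is generated by the image of a uniformizer of C, and its residue field is isomorphic to the residue field of A. -/
/-!
Let `ϖ` be the image of `πC` in `A ⊗[B] C`. Base-changing the isomorphism `C ⧸ (πC) ≅ B ⧸ (πB)`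
along `B → A` identifies `(A ⊗[B] C) ⧸ (ϖ)` with `A ⧸ πB A`, the residue field of `A`, so `(ϖ)`
is maximal. As `A ⊗[B] C` is finite over the local ring `A`, every maximal ideal contains `πB`,
which in `C` is a unit times a power of `πC`; hence `(ϖ)` is the only maximal ideal. Finally a
Noetherian local ring whose maximal ideal is generated by a non-nilpotent element is a DVR, by
Krull's intersection theorem, and `ϖ` is not nilpotent because `C` embeds into `A ⊗[B] C` by
flatness.
-/

open IsLocalRing TensorProduct

theorem exists_associated_pow_of_maximalIdeal_eq_span {R : Type*} [CommRing R]
    [IsNoetherianRing R] [IsLocalRing R] {ϖ x : R}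
    (hϖ : maximalIdeal R = Ideal.span {ϖ}) (hx : x ≠ 0) : ∃ n, Associated (ϖ ^ n) x := by
  classical
  have hex : ∃ k, ¬ϖ ^ k ∣ x := by
    by_contra! h
    apply hx
    rw [← Ideal.mem_bot, ← Ideal.iInf_pow_eq_bot_of_isLocalRing _ (maximalIdeal.isMaximal R).ne_top,
      Submodule.mem_iInf]
    intro k
    rw [hϖ, Ideal.span_singleton_pow, Ideal.mem_span_singleton]
    exact h k
  obtain ⟨n, hn⟩ := Nat.exists_eq_succ_of_ne_zero (n := Nat.find hex) fun h0 ↦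
    Nat.find_spec hex (by rw [h0, pow_zero]; exact one_dvd x)
  obtain ⟨y, rfl⟩ := not_not.mp (Nat.find_min hex (hn ▸ n.lt_succ_self))
  refine ⟨n, IsUnit.unit (a := y) (by_contra fun hy ↦ ?_), rfl⟩
  obtain ⟨z, rfl⟩ := Ideal.mem_span_singleton.mp (hϖ ▸ (mem_maximalIdeal y).mpr hy)
  exact Nat.find_spec hex (hn ▸ ⟨z, by rw [pow_succ]; ring⟩)

theorem isDomain_of_maximalIdeal_eq_span_s9 {R : Type*} [CommRing R]
    [IsNoetherianRing R] [IsLocalRing R] {ϖ : R}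
    (hϖ : maximalIdeal R = Ideal.span {ϖ}) (hnil : ¬IsNilpotent ϖ) : IsDomain R := by
  have : NoZeroDivisors R := by
    refine ⟨fun {x y} hxy ↦ or_iff_not_and_not.mpr fun ⟨hx, hy⟩ ↦ ?_⟩
    obtain ⟨m, hm⟩ := exists_associated_pow_of_maximalIdeal_eq_span hϖ hx
    obtain ⟨k, hk⟩ := exists_associated_pow_of_maximalIdeal_eq_span hϖ hy
    exact hnil ⟨m + k, by rw [pow_add]; exact (hm.mul_mul hk).eq_zero_iff.mpr hxy⟩
  exact NoZeroDivisors.to_isDomain R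

theorem isDiscreteValuationRing_of_maximalIdeal_eq_span_s9 {R : Type*} [CommRing R] [IsDomain R]
    [IsNoetherianRing R] [IsLocalRing R] {ϖ : R}
    (hϖ : maximalIdeal R = Ideal.span {ϖ}) (hϖ0 : ϖ ≠ 0) : IsDiscreteValuationRing R :=
  .ofHasUnitMulPowIrreducibleFactorization
    ⟨ϖ, IsDiscreteValuationRing.irreducible_of_span_eq_maximalIdeal ϖ hϖ0 hϖ,
      exists_associated_pow_of_maximalIdeal_eq_span hϖ⟩

theorem IsDiscreteValuationRing.mem_radical_span_singleton {R : Type*} [CommRing R] [IsDomain R]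
    [IsDiscreteValuationRing R] {ϖ x : R} (hϖ : Irreducible ϖ) (hx : x ≠ 0) :
    ϖ ∈ (Ideal.span {x}).radical :=
  let ⟨n, hn⟩ := associated_pow_irreducible hx hϖ
  ⟨n, Ideal.mem_span_singleton.mpr hn.dvd⟩

theorem IsLocalRing.of_isIntegral_of_le_radical_map {A R : Type*} [CommRing A] [IsLocalRing A]
    [CommRing R] [Algebra A R] [Algebra.IsIntegral A R] {J : Ideal R} (hJ : J.IsMaximal)
    (hle : J ≤ ((maximalIdeal A).map (algebraMap A R)).radical) : IsLocalRing R := by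
  refine .of_unique_max_ideal ⟨J, hJ, fun M hM ↦ (hJ.eq_of_le hM.ne_top ?_).symm⟩
  have hcomap : M.comap (algebraMap A R) = maximalIdeal A :=
    eq_maximalIdeal (Ideal.isMaximal_comap_of_isIntegral_of_isMaximal M)
  refine hle.trans (hM.isPrime.radical_le_iff.mpr ?_)
  exact Ideal.map_le_iff_le_comap.mpr hcomap.ge

namespace Algebra.TensorProduct

noncomputable def quotMapIncludeRightEquiv {B A C : Type*} [CommRing B] [CommRing A] [CommRing C]
    [Algebra B A] [Algebra B C] {I : Ideal C} {I₀ : Ideal B} (e : (C ⧸ I) ≃ₐ[B] (B ⧸ I₀)) :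
    ((A ⊗[B] C) ⧸ I.map (includeRight : C →ₐ[B] A ⊗[B] C)) ≃ₐ[A]
      A ⧸ I₀.map (algebraMap B A) :=
  (tensorQuotientEquiv (R := B) A C A I).symm.trans <|
    (congr AlgEquiv.refl e).trans (quotIdealMapEquivTensorQuot A I₀).symm

theorem includeRight_mem_radical_map {B A C : Type*} [CommRing B] [CommRing A] [CommRing C]
    [Algebra B A] [Algebra B C] {I : Ideal A} {b : B} (hb : algebraMap B A b ∈ I) {c : C}
    (hc : c ∈ (Ideal.span {algebraMap B C b}).radical) :
    includeRight c ∈ (I.map (algebraMap A (A ⊗[B] C))).radical := by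
  obtain ⟨n, hn⟩ := hc
  obtain ⟨d, hd⟩ := Ideal.mem_span_singleton'.mp hn
  refine ⟨n, ?_⟩
  rw [← map_pow, ← hd, map_mul, AlgHom.commutes, IsScalarTower.algebraMap_apply B A]
  exact Ideal.mul_mem_left _ _ (Ideal.mem_map_of_mem _ hb)

end Algebra.TensorProduct

theorem stmt_9_general (B A C : Type*) [CommRing B] [IsDomain B] [IsDiscreteValuationRing B]
    [CommRing A] [IsDomain A] [IsDiscreteValuationRing A]
    [CommRing C] [IsDomain C] [IsDiscreteValuationRing C]
    [Algebra B A] [Algebra B C]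
    (hAinj : Function.Injective (algebraMap B A))
    (πB : B) (hπB : Irreducible πB)
    (hunram : maximalIdeal A = Ideal.span {algebraMap B A πB})
    [Module.Finite B C] [Module.Free B C]
    (hCinj : Function.Injective (algebraMap B C)) [IsLocalHom (algebraMap B C)]
    (hres : Function.Bijective (ResidueField.map (algebraMap B C)))
    (πC : C) (hπC : Irreducible πC) :
    (∃ hd : IsDomain (A ⊗[B] C), @IsDiscreteValuationRing _ _ hd) ∧
    ∃ hl : IsLocalRing (A ⊗[B] C),
      @maximalIdeal _ _ hl
          = Ideal.span {(Algebra.TensorProduct.includeRight πC : A ⊗[B] C)} ∧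
      Nonempty (@ResidueField _ _ hl ≃+* ResidueField A) := by
  set ϖ : A ⊗[B] C := Algebra.TensorProduct.includeRight πC
  have hmap_mB : (maximalIdeal B).map (algebraMap B A) = maximalIdeal A := by
    rw [(IsDiscreteValuationRing.irreducible_iff_uniformizer πB).mp hπB, Ideal.map_span,
      Set.image_singleton, hunram]
  have hmap_mC :
      (maximalIdeal C).map (Algebra.TensorProduct.includeRight : C →ₐ[B] A ⊗[B] C) =
        Ideal.span {ϖ} := by
    rw [(IsDiscreteValuationRing.irreducible_iff_uniformizer πC).mp hπC, Ideal.map_span,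
      Set.image_singleton]
  let eC : (C ⧸ maximalIdeal C) ≃ₐ[B] (B ⧸ maximalIdeal B) :=
    (AlgEquiv.ofBijective (IsScalarTower.toAlgHom B (ResidueField B) (ResidueField C)) hres).symm
  let e : ((A ⊗[B] C) ⧸ Ideal.span {ϖ}) ≃+* ResidueField A :=
    (Ideal.quotEquivOfEq hmap_mC.symm).trans <|
      (Algebra.TensorProduct.quotMapIncludeRightEquiv eC).toRingEquiv.trans
        (Ideal.quotEquivOfEq hmap_mB)
  have hmax : (Ideal.span {ϖ}).IsMaximal :=
    Ideal.Quotient.maximal_of_isField _ (e.toMulEquiv.isField (Field.toIsField _))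
  have hπBC : algebraMap B C πB ≠ 0 := (map_ne_zero_iff _ hCinj).mpr hπB.ne_zero
  have hle : Ideal.span {ϖ} ≤ ((maximalIdeal A).map (algebraMap A (A ⊗[B] C))).radical :=
    Ideal.span_le.mpr <| Set.singleton_subset_iff.mpr <|
      Algebra.TensorProduct.includeRight_mem_radical_map (hunram ▸ Ideal.mem_span_singleton_self _)
        (IsDiscreteValuationRing.mem_radical_span_singleton hπC hπBC)
  have := IsLocalRing.of_isIntegral_of_le_radical_map hmax hle
  have hm : maximalIdeal (A ⊗[B] C) = Ideal.span {ϖ} := (eq_maximalIdeal hmax).symm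
  have hnil : ¬IsNilpotent ϖ := fun h ↦ hπC.ne_zero <|
    ((IsNilpotent.map_iff (Algebra.TensorProduct.includeRight_injective hAinj)).mp h).eq_zero
  have : IsNoetherianRing (A ⊗[B] C) := Algebra.FiniteType.isNoetherianRing A _
  have := isDomain_of_maximalIdeal_eq_span_s9 hm hnil
  exact ⟨⟨_, isDiscreteValuationRing_of_maximalIdeal_eq_span_s9 hm fun h ↦ hnil ⟨1, by simpa⟩⟩,
    _, hm, ⟨(Ideal.quotEquivOfEq hm).trans e⟩⟩

/-- If `A` is an unramified extension of a DVR `B` (injective local map, with a uniformizer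
of `B` generating the maximal ideal of `A`) and `C` is a totally ramified extension of `B`
(finite free, injective local map inducing an isomorphism on residue fields), then
`A ⊗[B] C` is a DVR whose maximal ideal is generated by the image of a uniformizer of `C`,
with residue field that of `A`. -/
theorem stmt_9 (B A C : Type*) [CommRing B] [IsDomain B] [IsDiscreteValuationRing B]
    [CommRing A] [IsDomain A] [IsDiscreteValuationRing A]
    [CommRing C] [IsDomain C] [IsDiscreteValuationRing C]
    [Algebra B A] [Algebra B C]
    (hAinj : Function.Injective (algebraMap B A)) [IsLocalHom (algebraMap B A)]
    (πB : B) (hπB : Irreducible πB)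
    (hunram : maximalIdeal A = Ideal.span {algebraMap B A πB})
    [Module.Finite B C] [Module.Free B C]
    (hCinj : Function.Injective (algebraMap B C)) [IsLocalHom (algebraMap B C)]
    (hres : Function.Bijective (ResidueField.map (algebraMap B C)))
    (πC : C) (hπC : Irreducible πC) :
    (∃ hd : IsDomain (A ⊗[B] C), @IsDiscreteValuationRing _ _ hd) ∧
    ∃ hl : IsLocalRing (A ⊗[B] C),
      @maximalIdeal _ _ hl
          = Ideal.span {(Algebra.TensorProduct.includeRight πC : A ⊗[B] C)} ∧
      Nonempty (@ResidueField _ _ hl ≃+* ResidueField A) :=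
  stmt_9_general B A C hAinj πB hπB hunram hCinj hres πC hπC
end

section
/- Let L be a field of characteristic p > 0 and q = p^m with m ≥ 1. Let σ : L((t)) → L((t)) be the ring homomorphism of the Laurent series field that fixes t and raises every coefficient to the q-th power. Let R be the ring of sequences (c_n)_{n∈ℕ} of elements of L satisfying c_n = c_{n+1}^q for all n (the inverse limit of the system (L, a ↦ a^q)), which is a field. Then the ring of sequences (f_n)_{n∈ℕ} of elements of L((t)) satisfying f_n = σ(f_{n+1}) for all n (the inverse limit of the system (L((t)), σ)) is isomorphic as a ring to the Laurent series field R((t)). -/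
/-!
The transition map `σ` acts on coefficients as `φ`, so a compatible sequence of Laurent series
is the same thing as a Laurent series whose coefficients are compatible sequences. The only
point to check is that the latter has a well-founded support: since `φ` is injective, all
members of a compatible sequence have the same support, namely that of its first member.
-/

open Function HahnSeries

noncomputable section

namespace HahnSeries

variable {Γ R S : Type*} [AddCommMonoid Γ] [PartialOrder Γ] [IsOrderedCancelAddMonoid Γ]

def mapRingHom [Semiring R] [Semiring S] (f : R →+* S) : R⟦Γ⟧ →+* S⟦Γ⟧ where
  toFun x := x.map f
  map_one' := HahnSeries.map_one f.toMonoidWithZeroHom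
  map_mul' _ _ := HahnSeries.map_mul (f : R →ₙ+* S)
  map_zero' := HahnSeries.map_zero (f : ZeroHom R S)
  map_add' _ _ := HahnSeries.map_add (f : R →+ S)

@[simp]
theorem coeff_mapRingHom [Semiring R] [Semiring S] (f : R →+* S) (x : R⟦Γ⟧) (i : Γ) :
    (mapRingHom f x).coeff i = f (x.coeff i) :=
  rfl

end HahnSeries

/-- The inverse limit of `⋯ → A → A → A` along `f`: sequences with `c n = f (c (n + 1))`. -/
def invLimit {A : Type*} [Ring A] (f : A →+* A) : Subring (ℕ → A) :=
  RingHom.eqLocus (RingHom.id (ℕ → A))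
    (RingHom.pi fun n => f.comp (Pi.evalRingHom (fun _ => A) (n + 1)))

section invLimit

variable {A : Type*} [Ring A] {f : A →+* A}

theorem mem_invLimit {c : ℕ → A} : c ∈ invLimit f ↔ ∀ n, c n = f (c (n + 1)) :=
  funext_iff

theorem eq_zero_of_mem_invLimit (hf : Injective f) {c : ℕ → A} (hc : c ∈ invLimit f)
    (h₀ : c 0 = 0) : c = 0 := by
  funext n
  induction n with
  | zero => exact h₀
  | succ n ih =>
    exact hf (by rw [Pi.zero_apply, map_zero, ← mem_invLimit.mp hc n, ih, Pi.zero_apply])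

variable {Γ : Type*} [AddCommMonoid Γ] [PartialOrder Γ] [IsOrderedCancelAddMonoid Γ]

variable (f) in
def toInvLimit : (invLimit f)⟦Γ⟧ →+* invLimit (mapRingHom (Γ := Γ) f) :=
  (RingHom.pi fun n => mapRingHom ((Pi.evalRingHom (fun _ => A) n).comp (invLimit f).subtype))
    |>.codRestrict _ fun g => mem_invLimit.mpr fun n => by
      ext i
      exact mem_invLimit.mp (g.coeff i).2 n

theorem coeff_mem_invLimit (F : invLimit (mapRingHom (Γ := Γ) f)) (i : Γ) :
    (fun n => (F.1 n).coeff i) ∈ invLimit f :=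
  mem_invLimit.mpr fun n => by rw [mem_invLimit.mp F.2 n, coeff_mapRingHom]

def ofInvLimit (hf : Injective f) (F : invLimit (mapRingHom (Γ := Γ) f)) :
    (invLimit f)⟦Γ⟧ where
  coeff i := ⟨fun n => (F.1 n).coeff i, coeff_mem_invLimit F i⟩
  isPWO_support' := (F.1 0).isPWO_support.mono fun i hi h₀ =>
    hi <| Subtype.ext <| eq_zero_of_mem_invLimit hf (coeff_mem_invLimit F i) h₀

def invLimitMapRingHomEquiv (hf : Injective f) :
    invLimit (mapRingHom (Γ := Γ) f) ≃+* (invLimit f)⟦Γ⟧ :=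
  RingEquiv.symm
    { toInvLimit f with
      invFun := ofInvLimit hf
      left_inv := fun _ => rfl
      right_inv := fun _ => rfl }

end invLimit

end

theorem stmt_10_general (L : Type*) [Field L] (q : ℕ)
    (φ : L →+* L) (hφ : ∀ a : L, φ a = a ^ q)
    (σ : LaurentSeries L →+* LaurentSeries L)
    (hσ : ∀ (f : LaurentSeries L) (n : ℤ), (σ f).coeff n = f.coeff n ^ q) :
    Nonempty
      ((RingHom.eqLocus (RingHom.id (ℕ → LaurentSeries L))
          (Pi.ringHom fun n => σ.comp (Pi.evalRingHom (fun _ => LaurentSeries L) (n + 1))))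
        ≃+*
       LaurentSeries (RingHom.eqLocus (RingHom.id (ℕ → L))
          (Pi.ringHom fun n => φ.comp (Pi.evalRingHom (fun _ => L) (n + 1))))) := by
  obtain rfl : σ = mapRingHom φ := by
    ext f n
    rw [hσ, coeff_mapRingHom, hφ]
  exact ⟨invLimitMapRingHomEquiv φ.injective⟩

/-- Let `L` be a field of characteristic `p`, `q = p^m` (`m ≥ 1`), `φ : L → L` the
`q`-power Frobenius, and `σ : L((t)) → L((t))` the ring homomorphism raising each
coefficient to the `q`-th power (and fixing `t`). Let `R` be the field of sequences
`(c_n)` in `L` with `c_n = c_{n+1}^q` (the inverse limit of `(L, a ↦ a^q)`). Then the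
inverse limit of the system `(L((t)), σ)`, i.e. the ring of sequences `(f_n)` in `L((t))`
with `f_n = σ(f_{n+1})`, is isomorphic as a ring to the Laurent series ring `R((t))`. -/
theorem stmt_10 (p : ℕ) (hp : p.Prime) (L : Type*) [Field L] [CharP L p]
    (m : ℕ) (hm : 1 ≤ m) (q : ℕ) (hq : q = p ^ m)
    (φ : L →+* L) (hφ : ∀ a : L, φ a = a ^ q)
    (σ : LaurentSeries L →+* LaurentSeries L)
    (hσ : ∀ (f : LaurentSeries L) (n : ℤ), (σ f).coeff n = f.coeff n ^ q) :
    Nonempty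
      ((RingHom.eqLocus (RingHom.id (ℕ → LaurentSeries L))
          (Pi.ringHom fun n => σ.comp (Pi.evalRingHom (fun _ => LaurentSeries L) (n + 1))))
        ≃+*
       LaurentSeries (RingHom.eqLocus (RingHom.id (ℕ → L))
          (Pi.ringHom fun n => φ.comp (Pi.evalRingHom (fun _ => L) (n + 1))))) :=
  stmt_10_general L q φ hφ σ hσ
end

section
/- Let E be a separably closed field of characteristic p > 0, q = p^m with m ≥ 1, and k = { a ∈ E : a^q = a } the subfield of q-Frobenius-fixed elements of E (a field with q elements). Let D be a finite-dimensional E-vector space and f : D → D an additive map satisfying f(a·v) = a^q·f(v) for all a ∈ E, v ∈ D, and such that the E-linear span of the image f(D) is all of D (f is étale). Then the fixed-point set D^{f=1} = { v ∈ D : f(v) = v } is a k-vector space whose dimension over k equals dim_E D, and the natural E-linear map E ⊗_k D^{f=1} → D sending a ⊗ v to a·v is bijective. -/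
/-!
An étale `q`-Frobenius-semilinear `F` on a nonzero `D` has a nonzero fixed vector: take `v ≠ 0`
and the first relation `F^n v = ∑_{j<n} c_j F^j v`; if `c_0 = 0` the relation is one for `F v`
of smaller length, and if `c_0 ≠ 0` the fixed vectors `∑_{j<n} z_{j+1} F^j v` are given by the
solutions `t = z_n` of `P(t) = t` for an additive polynomial `P` of degree `q^n`, which have a
nonzero one since `P - X` is separable. Applied to `D / span(D^{F=1})`, with fixed vectors lifted
back by solving Artin–Schreier equations `a^q - a = c`, this shows that `D^{F=1}` spans `D`.
Every fixed vector has Frobenius-fixed, i.e. `k`-valued, coordinates in an `E`-basis of fixed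
vectors, so that basis is also a `k`-basis of `D^{F=1}`.
-/

open TensorProduct

variable {E : Type*} [Field E] {q : ℕ}
  {k : Type*} [Field k] [Algebra k E]
  {D : Type*} [AddCommGroup D] [Module k D] [Module E D] [IsScalarTower k E D]

/-- The `k`-subspace of fixed points of a `q`-Frobenius-semilinear map `f` on an
`E`-vector space `D`, where `k` is the subfield `{a : E | a^q = a}` of `E`. -/
def frobeniusFixedSubmodule
    (hk : ∀ a : E, a ∈ Set.range (algebraMap k E) ↔ a ^ q = a)
    (f : D → D) (hadd : ∀ x y : D, f (x + y) = f x + f y)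
    (hsmul : ∀ (a : E) (x : D), f (a • x) = a ^ q • f x) : Submodule k D where
  carrier := {v | f v = v}
  add_mem' := fun {a b} ha hb => by
    show f (a + b) = a + b
    rw [hadd, ha, hb]
  zero_mem' := by
    show f 0 = 0
    have h := hadd 0 0
    rw [add_zero] at h
    exact (left_eq_add.mp h)
  smul_mem' := fun c v hv => by
    show f (c • v) = c • v
    have hc : algebraMap k E c ^ q = algebraMap k E c := (hk _).mp ⟨c, rfl⟩
    rw [← algebraMap_smul E c v, hsmul, hc, hv]

open Polynomial

section Polynomial

/-- Evaluated at `t`, these give the coordinates `z_j` of the candidate fixed vector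
`∑_{j<n} z_{j+1} F^j v` when `F^n v = ∑_{j<n} c_j F^j v`; being fixed amounts to `z_n = t`. -/
noncomputable def fixedPointPoly (q : ℕ) (c : ℕ → E) : ℕ → E[X]
  | 0 => 0
  | j + 1 => fixedPointPoly q c j ^ q + C (c j) * X ^ q

variable {c : ℕ → E}

theorem derivative_fixedPointPoly (hq : (q : E) = 0) (j : ℕ) :
    derivative (fixedPointPoly q c j) = 0 := by
  cases j <;> simp [fixedPointPoly, derivative_pow, hq]

theorem natDegree_fixedPointPoly (hq : 1 < q) (hc : c 0 ≠ 0) (j : ℕ) :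
    (fixedPointPoly q c (j + 1)).natDegree = q ^ (j + 1) := by
  induction j with
  | zero => simp [fixedPointPoly, zero_pow (by omega : q ≠ 0), natDegree_C_mul_X_pow _ _ hc]
  | succ j ih =>
    have hlt : (C (c (j + 1)) * X ^ q).natDegree < (fixedPointPoly q c (j + 1) ^ q).natDegree := by
      rw [natDegree_pow, ih, ← pow_succ']
      exact (natDegree_C_mul_X_pow_le _ _).trans_lt
        (by simpa using Nat.pow_lt_pow_right hq (by omega : 1 < j + 1 + 1))
    rw [fixedPointPoly, natDegree_add_eq_left_of_natDegree_lt hlt, natDegree_pow, ih, ← pow_succ']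

variable [IsSepClosed E]

theorem ncard_eval_sub_self_eq {P : E[X]} (hP : derivative P = 0) (hdeg : 2 ≤ P.natDegree)
    (c : E) : {t : E | P.eval t - t = c}.ncard = P.natDegree := by
  classical
  have hsep : (P - X - C c).Separable := by
    rw [separable_def, derivative_sub, derivative_sub, hP, derivative_X, derivative_C]
    simpa using isCoprime_one_right.neg_right
  have hdegG : (P - X - C c).natDegree = P.natDegree := by
    rw [sub_sub, natDegree_sub_eq_left_of_natDegree_lt]
    have := natDegree_add_le_of_degree_le (p := (X : E[X])) (q := C c) (n := 1) natDegree_X_le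
      (by rw [natDegree_C]; exact zero_le_one)
    omega
  have hset : {t : E | P.eval t - t = c} = ((P - X - C c).roots.toFinset : Set E) := by
    ext t
    have hG : P - X - C c ≠ 0 := ne_zero_of_natDegree_gt (n := 0) (by omega)
    rw [Finset.mem_coe, Multiset.mem_toFinset, mem_roots hG]
    simp [sub_sub, sub_eq_iff_eq_add']
  rw [hset, Set.ncard_coe_finset, Multiset.toFinset_card_of_nodup (nodup_roots hsep),
    splits_iff_card_roots.mp (IsSepClosed.splits_of_separable _ hsep), hdegG]

theorem exists_pow_sub_self_eq (hq : (q : E) = 0) (hq1 : 1 < q) (c : E) :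
    ∃ a : E, a ^ q - a = c := by
  have hcard := ncard_eval_sub_self_eq (P := X ^ q)
    (by rw [derivative_X_pow, hq, C_0, zero_mul]) (by rw [natDegree_X_pow]; omega) c
  rw [natDegree_X_pow] at hcard
  obtain ⟨a, ha⟩ := Set.nonempty_of_ncard_ne_zero (s := {t : E | (X ^ q).eval t - t = c})
    (by omega)
  exact ⟨a, by simpa using ha⟩

end Polynomial

section LinearAlgebra

theorem exists_eq_sum_range_of_mem_span {u : ℕ → D} {n : ℕ} {x : D}
    (hx : x ∈ Submodule.span E (Set.range fun i : Fin n => u i)) :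
    ∃ c : ℕ → E, x = ∑ j ∈ Finset.range n, c j • u j := by
  obtain ⟨c, rfl⟩ := (Submodule.mem_span_range_iff_exists_fun E).mp hx
  refine ⟨fun j => if h : j < n then c ⟨j, h⟩ else 0, ?_⟩
  rw [← Fin.sum_univ_eq_sum_range]
  simp

theorem exists_linearIndependent_and_eq_sum [FiniteDimensional E D] (u : ℕ → D) :
    ∃ n, (LinearIndependent E fun i : Fin n => u i) ∧
      ∃ c : ℕ → E, u n = ∑ j ∈ Finset.range n, c j • u j := by
  by_contra! h
  have hli (n : ℕ) : LinearIndependent E fun i : Fin n => u i := by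
    induction n with
    | zero => exact linearIndependent_empty_type
    | succ n ih =>
      rw [← Fin.snoc_init_self (fun i : Fin (n + 1) => u i), linearIndependent_finSnoc]
      exact ⟨ih, fun hn => (exists_eq_sum_range_of_mem_span hn).elim (h n ih)⟩
  simpa using (hli (Module.finrank E D + 1)).fintype_card_le_finrank

end LinearAlgebra

namespace LinearMap

section Semilinear

variable {σ : E →+* E} (F : D →ₛₗ[σ] D)

theorem injective_of_span_range_eq_top [FiniteDimensional E D]
    (hF : Submodule.span E (Set.range F) = ⊤) : Function.Injective F := by
  let b := Module.finBasis E D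
  have hFb (v : D) : F v = ∑ i, σ (b.repr v i) • F (b i) := by
    conv_lhs => rw [← b.sum_repr v]
    simp only [map_sum, map_smulₛₗ]
  have hli : LinearIndependent E (F ∘ b) := by
    refine linearIndependent_of_top_le_span_of_card_eq_finrank ?_ (by simp)
    rw [← hF, Submodule.span_le]
    rintro _ ⟨v, rfl⟩
    rw [hFb]
    exact Submodule.sum_mem _ fun i _ => Submodule.smul_mem _ _ (Submodule.subset_span ⟨i, rfl⟩)
  refine (injective_iff_map_eq_zero F).mpr fun v hv => b.ext_elem fun i => ?_
  simpa using Fintype.linearIndependent_iff.mp hli _ ((hFb v).symm.trans hv) i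

theorem repr_apply_eq_of_map_eq_self {ι : Type*} [Fintype ι] (b : Module.Basis ι E D)
    (hb : ∀ i, F (b i) = b i) {v : D} (hv : F v = v) (i : ι) :
    σ (b.repr v i) = b.repr v i := by
  have hFv : F v = ∑ i, σ (b.repr v i) • b i := by
    conv_lhs => rw [← b.sum_repr v]
    simp only [map_sum, map_smulₛₗ, hb]
  calc σ (b.repr v i) = b.repr (∑ j, σ (b.repr v j) • b j) i := by rw [b.repr_sum_self]
    _ = b.repr v i := by rw [← hFv, hv]

theorem map_eq_self_iff_mem_span_of_basis
    (hk : ∀ a : E, a ∈ Set.range (algebraMap k E) ↔ σ a = a)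
    {ι : Type*} [Fintype ι] (b : Module.Basis ι E D)
    (hb : ∀ i, F (b i) = b i) (v : D) : F v = v ↔ v ∈ Submodule.span k (Set.range b) := by
  constructor
  · intro hv
    rw [← b.sum_repr v]
    refine Submodule.sum_mem _ fun i _ => ?_
    obtain ⟨a, ha⟩ := (hk _).mpr (F.repr_apply_eq_of_map_eq_self b hb hv i)
    rw [← ha, algebraMap_smul]
    exact Submodule.smul_mem _ _ (Submodule.subset_span ⟨i, rfl⟩)
  · intro hv
    obtain ⟨a, rfl⟩ := (Submodule.mem_span_range_iff_exists_fun k).mp hv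
    rw [map_sum]
    refine Finset.sum_congr rfl fun i _ => ?_
    rw [← algebraMap_smul E (a i) (b i), map_smulₛₗ, hb, (hk _).mp ⟨_, rfl⟩]

theorem finrank_eq_and_bijective_liftBaseChange [FiniteDimensional E D]
    (hk : ∀ a : E, a ∈ Set.range (algebraMap k E) ↔ σ a = a)
    (hspan : Submodule.span E {v | F v = v} = ⊤) (V : Submodule k D)
    (hV : ∀ v, v ∈ V ↔ F v = v) :
    Module.finrank k V = Module.finrank E D ∧
      Function.Bijective (LinearMap.liftBaseChange E V.subtype : E ⊗[k] V →ₗ[E] D) := by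
  let b := Module.Basis.ofSpan hspan.ge
  have := Module.Finite.finite_basis b
  have := Fintype.ofFinite
  have hb (i) : F (b i) = b i := Module.Basis.ofSpan_subset hspan.ge ⟨i, rfl⟩
  have hVb : Submodule.span k (Set.range b) = V := by
    ext v
    rw [hV, F.map_eq_self_iff_mem_span_of_basis hk b hb]
  let bV := (b.restrictScalars k).map (LinearEquiv.ofEq _ _ hVb)
  have hbV (i) : (bV i : D) = b i := b.restrictScalars_apply k i
  have hlift : (LinearMap.liftBaseChange E V.subtype : E ⊗[k] V →ₗ[E] D) =
      (bV.baseChange E).equiv b (Equiv.refl _) :=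
    (bV.baseChange E).ext fun i => by
      rw [LinearEquiv.coe_coe, Module.Basis.equiv_apply, Module.Basis.baseChange_apply]
      simp [hbV]
  refine ⟨(Module.finrank_eq_card_basis bV).trans (Module.finrank_eq_card_basis b).symm, ?_⟩
  rw [hlift]
  exact LinearEquiv.bijective _

end Semilinear

end LinearMap

section Frobenius

variable {p m : ℕ} [Fact p.Prime] [CharP E p] (F : D →ₛₗ[iterateFrobenius E p m] D)

theorem map_sum_smul_iterate (v : D) (n : ℕ) (a : ℕ → E) :
    F (∑ j ∈ Finset.range n, a j • F^[j] v) =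
      ∑ j ∈ Finset.range n, a j ^ p ^ m • F^[j + 1] v := by
  simp [map_sum, iterateFrobenius_def, Function.iterate_succ_apply']

variable [IsSepClosed E]

theorem exists_fixed_of_iterate_eq_sum_of_ne_zero (hm : m ≠ 0) {v : D} {n : ℕ} (hn : n ≠ 0)
    (hli : LinearIndependent E fun i : Fin n => F^[i] v) {c : ℕ → E}
    (hc : F^[n] v = ∑ j ∈ Finset.range n, c j • F^[j] v) (hc0 : c 0 ≠ 0) :
    ∃ x ≠ 0, F x = x := by
  have hq : ((p ^ m : ℕ) : E) = 0 := by simp [hm]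
  have hq1 : 1 < p ^ m := Nat.one_lt_pow hm (Fact.out : p.Prime).one_lt
  obtain ⟨l, rfl⟩ : ∃ l, n = l + 1 := Nat.exists_eq_succ_of_ne_zero hn
  have hdeg := natDegree_fixedPointPoly hq1 hc0 l
  have hqn : 1 < (p ^ m) ^ (l + 1) := hq1.trans_le (Nat.le_self_pow (by omega) _)
  obtain ⟨t, ht, ht0⟩ := Set.exists_ne_of_one_lt_ncard (a := 0)
    (s := {t : E | (fixedPointPoly (p ^ m) c (l + 1)).eval t - t = 0}) (by
      rwa [ncard_eval_sub_self_eq (derivative_fixedPointPoly hq _) (by omega), hdeg])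
  set z : ℕ → E := fun j => (fixedPointPoly (p ^ m) c j).eval t
  have hz (j : ℕ) : z (j + 1) = z j ^ p ^ m + c j * t ^ p ^ m := by simp [z, fixedPointPoly]
  have hz0 : z 0 = 0 := by simp [z, fixedPointPoly]
  have hzn : z (l + 1) = t := sub_eq_zero.mp ht
  refine ⟨∑ j ∈ Finset.range (l + 1), z (j + 1) • F^[j] v, ?_, ?_⟩
  · intro hx
    apply ht0
    rw [← hzn]
    simpa using Fintype.linearIndependent_iff.mp hli (fun i => z (i + 1))
      (by rwa [Fin.sum_univ_eq_sum_range (fun j => z (j + 1) • F^[j] v)]) (Fin.last l)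
  · have hshift : ∑ j ∈ Finset.range (l + 1), z (j + 1) ^ p ^ m • F^[j + 1] v =
        ∑ j ∈ Finset.range (l + 1), z j ^ p ^ m • F^[j] v + t ^ p ^ m • F^[l + 1] v := by
      rw [← hzn, ← Finset.sum_range_succ (fun j => z j ^ p ^ m • F^[j] v),
        Finset.sum_range_succ' (fun j => z j ^ p ^ m • F^[j] v), hz0, zero_pow (by omega),
        zero_smul, add_zero]
    rw [map_sum_smul_iterate, hshift, hc, Finset.smul_sum, ← Finset.sum_add_distrib]
    refine Finset.sum_congr rfl fun j _ => ?_
    rw [hz, add_smul, smul_smul, mul_comm]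

theorem exists_fixed_of_iterate_eq_sum (hm : m ≠ 0) (hF : Function.Injective F) {n : ℕ} :
    ∀ {v : D}, v ≠ 0 → (LinearIndependent E fun i : Fin n => F^[i] v) → ∀ {c : ℕ → E},
      F^[n] v = ∑ j ∈ Finset.range n, c j • F^[j] v → ∃ x ≠ 0, F x = x := by
  induction n with
  | zero => exact fun hv _ _ hc => absurd hc hv
  | succ l ih =>
    intro v hv hli c hc
    by_cases hc0 : c 0 = 0
    · refine ih ((map_ne_zero_iff F hF).mpr hv) (hli.comp Fin.succ (Fin.succ_injective _))
        (c := fun j => c (j + 1)) ?_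
      rw [Finset.sum_range_succ', hc0, zero_smul, add_zero] at hc
      exact hc
    · exact exists_fixed_of_iterate_eq_sum_of_ne_zero F hm (by omega) hli hc hc0

theorem exists_ne_zero_map_eq_self [FiniteDimensional E D] [Nontrivial D] (hm : m ≠ 0)
    (hF : Submodule.span E (Set.range F) = ⊤) : ∃ x ≠ 0, F x = x := by
  obtain ⟨v, hv⟩ := exists_ne (0 : D)
  obtain ⟨n, hli, c, hc⟩ := exists_linearIndependent_and_eq_sum (E := E) fun i => F^[i] v
  exact exists_fixed_of_iterate_eq_sum F hm (F.injective_of_span_range_eq_top hF) hv hli hc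

theorem exists_map_sub_self_eq (hm : m ≠ 0) {w : D} (hw : w ∈ Submodule.span E {v | F v = v}) :
    ∃ u ∈ Submodule.span E {v | F v = v}, F u - u = w := by
  induction hw using Submodule.closure_induction with
  | zero => exact ⟨0, Submodule.zero_mem _, by simp⟩
  | add x y _ _ hx hy =>
    obtain ⟨u₁, hu₁, rfl⟩ := hx
    obtain ⟨u₂, hu₂, rfl⟩ := hy
    exact ⟨u₁ + u₂, Submodule.add_mem _ hu₁ hu₂, by rw [map_add]; abel⟩
  | smul_mem a z hz =>
    obtain ⟨b, hb⟩ := exists_pow_sub_self_eq (q := p ^ m) (by simp [hm])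
      (Nat.one_lt_pow hm (Fact.out : p.Prime).one_lt) a
    refine ⟨b • z, Submodule.smul_mem _ _ (Submodule.subset_span hz), ?_⟩
    rw [map_smulₛₗ, iterateFrobenius_def, show F z = z from hz, ← sub_smul, hb]

theorem span_setOf_map_eq_self_eq_top [FiniteDimensional E D] (hm : m ≠ 0)
    (hF : Submodule.span E (Set.range F) = ⊤) : Submodule.span E {v | F v = v} = ⊤ := by
  set V := Submodule.span E {v | F v = v}
  by_contra hV
  have hstab : V ≤ V.comap F :=
    Submodule.span_le.mpr fun v hv => by
      simpa [show F v = v from hv] using (Submodule.subset_span hv : v ∈ V)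
  set G := V.mapQ V F hstab
  have hG : Submodule.span E (Set.range G) = ⊤ := by
    rw [eq_top_iff, ← V.range_mkQ, LinearMap.range_eq_map, ← hF, Submodule.map_span,
      Submodule.span_le]
    rintro _ ⟨_, ⟨d, rfl⟩, rfl⟩
    exact Submodule.subset_span ⟨V.mkQ d, V.mapQ_apply V F d⟩
  have : Nontrivial (D ⧸ V) := Submodule.Quotient.nontrivial_iff.mpr hV
  obtain ⟨xq, hxq, hGxq⟩ := exists_ne_zero_map_eq_self G hm hG
  obtain ⟨d, rfl⟩ := V.mkQ_surjective xq
  have hd : F d - d ∈ V := by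
    rwa [← Submodule.Quotient.eq, ← V.mapQ_apply V F (h := hstab)]
  obtain ⟨u, hu, hud⟩ := exists_map_sub_self_eq F hm hd
  have hdu : F (d - u) = d - u := by rw [map_sub, sub_eq_sub_iff_sub_eq_sub, hud]
  refine hxq ((Submodule.Quotient.mk_eq_zero V).mpr ?_)
  simpa using V.add_mem (Submodule.subset_span hdu) hu

end Frobenius

/-- Over a separably closed field `E` of characteristic `p`, with `q = p^m` and
`k = {a : E | a^q = a}`, an étale `q`-Frobenius-semilinear map `f` on a
finite-dimensional `E`-vector space `D` has fixed points `D^{f=1}` of `k`-dimension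
`dim_E D`, and the natural map `E ⊗[k] D^{f=1} → D` is bijective. -/
theorem stmt_11 (p : ℕ) (hp : p.Prime) [CharP E p] [IsSepClosed E]
    (m : ℕ) (hm : 1 ≤ m) (hq : q = p ^ m)
    (hk : ∀ a : E, a ∈ Set.range (algebraMap k E) ↔ a ^ q = a)
    [FiniteDimensional E D]
    (f : D → D) (hadd : ∀ x y : D, f (x + y) = f x + f y)
    (hsmul : ∀ (a : E) (x : D), f (a • x) = a ^ q • f x)
    (hetale : Submodule.span E (Set.range f) = ⊤) :
    Module.finrank k (frobeniusFixedSubmodule hk f hadd hsmul) = Module.finrank E D ∧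
    Function.Bijective
      (LinearMap.liftBaseChange E (frobeniusFixedSubmodule hk f hadd hsmul).subtype :
        E ⊗[k] (frobeniusFixedSubmodule hk f hadd hsmul) →ₗ[E] D) := by
  have : Fact p.Prime := ⟨hp⟩
  subst hq
  let F : D →ₛₗ[iterateFrobenius E p m] D :=
    { toFun := f
      map_add' := hadd
      map_smul' := fun a x => by rw [iterateFrobenius_def]; exact hsmul a x }
  have hspan := span_setOf_map_eq_self_eq_top F (by omega) hetale
  exact F.finrank_eq_and_bijective_liftBaseChange (by simpa [iterateFrobenius_def] using hk) hspan
    _ fun _ => Iff.rfl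
end
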